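/- Lemma (decomposition inequality, used in the proof of Theorem 4.1). Let G be a DAG instance with deterministic nonnegative weights w : E → ℝ≥0, let P_1,…,P_k be s,t-paths such that every node is visited by some P_i, and for each i let G_i be the graph with artificial edges constructed from P_i (node set V_i = nodes visited by P_i; edges: all edges of G with both endpoints in V_i, plus, for each edge e with src(e) ∈ V_i and dst(e) ∉ V_i, an artificial edge from src(e) to the smallest node of V_i reachable from dst(e) in G, carrying weight w_e). Then max over s,t-paths Q of G of Σ_{e ∈ Q} w_e ≤ Σ_{i=1}^k (max over s,t-paths of G_i of their total weight). -/

import Mathlib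

open MeasureTheory ProbabilityTheory

/-- A DAG instance: nodes `0,…,n` listed in topological order (start `s = 0`,
target `t = n`), and a finite set `E` of edges with `src e < dst e ≤ n`. -/
structure DAGInst where
  n : ℕ
  n_pos : 1 ≤ n
  E : Type
  fintypeE : Fintype E
  src : E → ℕ
  dst : E → ℕ
  src_lt_dst : ∀ e, src e < dst e
  dst_le_n : ∀ e, dst e ≤ n

attribute [instance] DAGInst.fintypeE

/-- Extension of a probability space by an additional independent
uniform-`[0,1]` random variable (the second coordinate). -/
noncomputable def extMeasure {Ω : Type} [MeasurableSpace Ω] (μ : Measure Ω) :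
    Measure (Ω × ℝ) :=
  μ.prod (MeasureTheory.volume.restrict (Set.Icc (0 : ℝ) 1))

namespace DAGInst

variable (G : DAGInst)

/-- `p` is an `s,t`-path: it starts at node `0`, ends at node `n`, and
consecutive edges match. -/
def IsPath (p : List G.E) : Prop :=
  p.head?.map G.src = some 0 ∧ p.getLast?.map G.dst = some G.n ∧
    List.Chain' (fun e f => G.dst e = G.src f) p

/-- The path `p` visits the node `v`. -/
def Visits (p : List G.E) (v : ℕ) : Prop :=
  v = 0 ∨ ∃ e ∈ p, G.dst e = v

instance (p : List G.E) (v : ℕ) : Decidable (G.Visits p v) :=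
  inferInstanceAs (Decidable (v = 0 ∨ ∃ e ∈ p, G.dst e = v))

/-- The value of the path `p` under (realized) weights `w`. -/
def pathValue (p : List G.E) (w : G.E → ℝ) : ℝ :=
  (p.map w).sum

/-- The edge that the path `p` takes out of node `i` (if any). -/
def takeOut (p : List G.E) (i : ℕ) : Option G.E :=
  p.find? fun e => G.src e == i

/-- The value of the prophet: the maximum value of an `s,t`-path. -/
noncomputable def OPTval {Ω : Type} (W : G.E → Ω → ℝ) (ω : Ω) : ℝ :=
  sSup {x | ∃ p, G.IsPath p ∧ x = G.pathValue p fun e => W e ω}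

/-- The independence assumption on the weights: the tuples of weights of edges
leaving distinct nodes are mutually independent. -/
def IndepWeights {Ω : Type} [MeasurableSpace Ω] (W : G.E → Ω → ℝ) (μ : Measure Ω) : Prop :=
  iIndepFun
    (fun (i : ℕ) (ω : Ω) => fun e : {e : G.E // G.src e = i} => W e.1 ω) μ

/-- The information available at node `i`: the σ-algebra generated by the auxiliary
uniform random variable `U = Prod.snd` and the weights of edges leaving nodes `≤ i`. -/
def infoAt {Ω : Type} (W : G.E → Ω → ℝ) (i : ℕ) : MeasurableSpace (Ω × ℝ) :=
  MeasurableSpace.comap (Prod.snd : Ω × ℝ → ℝ) inferInstance ⊔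
    ⨆ e : G.E, ⨆ _ : G.src e ≤ i,
      MeasurableSpace.comap (fun ω' : Ω × ℝ => W e ω'.1) inferInstance

/-- `A` is an online algorithm: a random `s,t`-path on the extended space such that
the edge taken out of each node `i < n` is measurable with respect to the information
available at node `i`. -/
def IsOnlineAlg {Ω : Type} (W : G.E → Ω → ℝ) (A : Ω × ℝ → List G.E) : Prop :=
  (∀ ω', G.IsPath (A ω')) ∧
    ∀ i < G.n, @Measurable (Ω × ℝ) (Option G.E) (G.infoAt W i) ⊤
      fun ω' => G.takeOut (A ω') i

/-- The σ-algebra generated by all the weights. -/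
def sigmaW {Ω : Type} (W : G.E → Ω → ℝ) : MeasurableSpace Ω :=
  ⨆ e : G.E, MeasurableSpace.comap (W e) inferInstance

/-- A path is feasible if, for every label `ℓ`, it uses at most `cap ℓ` edges
carrying the label `ℓ`. -/
def Feasible {L : Type} [DecidableEq L] (lab : G.E → Finset L) (cap : L → ℕ)
    (p : List G.E) : Prop :=
  ∀ ℓ : L, (p.filter fun e => decide (ℓ ∈ lab e)).length ≤ cap ℓ

/-- The value of the prophet in the labeled model: the maximum value of a feasible
`s,t`-path. -/
noncomputable def OPTvalFeas {Ω : Type} {L : Type} [DecidableEq L]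
    (lab : G.E → Finset L) (cap : L → ℕ) (W : G.E → Ω → ℝ) (ω : Ω) : ℝ :=
  sSup {x | ∃ p, G.IsPath p ∧ G.Feasible lab cap p ∧ x = G.pathValue p fun e => W e ω}

/-- Node `v` is reachable from node `u`. -/
def Reaches (u v : ℕ) : Prop :=
  u = v ∨ ∃ q : List G.E, q.head?.map G.src = some u ∧ q.getLast?.map G.dst = some v ∧
    List.Chain' (fun e f => G.dst e = G.src f) q

/-- Source of an edge of the auxiliary graph `G_i` (left: original edge,
right: artificial edge replacing an edge leaving `V(P_i)`). -/
def auxSrc : G.E ⊕ G.E → ℕ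
  | Sum.inl e => G.src e
  | Sum.inr e => G.src e

/-- Destination of an edge of the auxiliary graph `G_i`: an artificial edge built from
`e` ends at the smallest node of `V(P_i)` reachable from `dst e`. -/
noncomputable def auxDst (Pi : List G.E) : G.E ⊕ G.E → ℕ
  | Sum.inl e => G.dst e
  | Sum.inr e => sInf {v | G.Visits Pi v ∧ G.Reaches (G.dst e) v}

/-- Which formal edges are actually present in the auxiliary graph `G_i`. -/
def auxValid (Pi : List G.E) : G.E ⊕ G.E → Prop
  | Sum.inl e => G.Visits Pi (G.src e) ∧ G.Visits Pi (G.dst e)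
  | Sum.inr e => G.Visits Pi (G.src e) ∧ ¬ G.Visits Pi (G.dst e)

/-- Weight of an edge of the auxiliary graph: an artificial edge inherits the weight
of the original edge. -/
def auxWeight (w : G.E → ℝ) : G.E ⊕ G.E → ℝ
  | Sum.inl e => w e
  | Sum.inr e => w e

/-- An `s,t`-path of the auxiliary graph `G_i`. -/
def IsAuxPath (Pi : List G.E) (p : List (G.E ⊕ G.E)) : Prop :=
  (∀ f ∈ p, G.auxValid Pi f) ∧
    p.head?.map G.auxSrc = some 0 ∧
    p.getLast?.map (G.auxDst Pi) = some G.n ∧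
    List.Chain' (fun f g => G.auxDst Pi f = G.auxSrc g) p

end DAGInst

/-!
Fix an `s,t`-path `Q` of `G`. Every edge of `Q` leaves a node visited by some `P_i`, so the weight
of `Q` is at most the sum over `i` of the weight of the edges of `Q` leaving `V(P_i)`. For a
fixed `i`, walk along `Q` while keeping a current node `x ∈ V(P_i)` that lies below every node of
`V(P_i)` still reachable from `Q`: at an edge `e` of `Q` leaving `V(P_i)`, advance along `P_i`
from `x` to `src e` (nonnegative weights) and then take `e` itself, or its artificial copy, which
ends at the least node of `V(P_i)` reachable from `dst e`. This yields an `s,t`-path of `G_i`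
collecting at least that weight. The suprema over paths of `G_i` are finite because sources
strictly increase along a path of `G_i`, so no edge is used twice.
-/

section Walk

variable {V ε : Type*}

def IsWalk (s d : ε → V) : V → V → List ε → Prop
  | u, v, [] => u = v
  | u, v, e :: l => s e = u ∧ IsWalk s d (d e) v l

variable {s d : ε → V} {u v x y : V} {l l₂ : List ε}

theorem IsWalk.append (h₁ : IsWalk s d u v l) (h₂ : IsWalk s d v x l₂) :
    IsWalk s d u x (l ++ l₂) := by
  induction l generalizing u with
  | nil => exact (show u = v from h₁) ▸ h₂
  | cons e l ih => exact ⟨h₁.1, ih h₁.2⟩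

theorem IsWalk.map {ε' : Type*} {s' d' : ε' → V} (g : ε → ε') (hs : ∀ e, s' (g e) = s e)
    (hd : ∀ e, d' (g e) = d e) (h : IsWalk s d u v l) : IsWalk s' d' u v (l.map g) := by
  induction l generalizing u with
  | nil => exact h
  | cons e l ih => exact ⟨(hs e).trans h.1, (hd e).symm ▸ ih h.2⟩

theorem isWalk_and_ne_nil_iff :
    IsWalk s d u v l ∧ l ≠ [] ↔
      l.head?.map s = some u ∧ l.getLast?.map d = some v ∧
        l.IsChain (fun e f => d e = s f) := by
  induction l generalizing u with
  | nil => simp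
  | cons e l ih =>
    cases l with
    | nil => simp [IsWalk]
    | cons f l =>
      simp only [IsWalk, ne_eq, reduceCtorEq, not_false_eq_true, and_true] at ih ⊢
      rw [ih]
      simp only [List.head?_cons, Option.map_some, Option.some.injEq, List.getLast?_cons_cons,
        List.isChain_cons_cons]
      tauto

theorem IsWalk.split (h : IsWalk s d u v l) (hx : x = u ∨ ∃ e ∈ l, d e = x) :
    ∃ l₁ l₂, l = l₁ ++ l₂ ∧ IsWalk s d u x l₁ ∧ IsWalk s d x v l₂ := by
  induction l generalizing u with
  | nil =>
    obtain rfl | ⟨e, he, -⟩ := hx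
    · exact ⟨[], [], rfl, rfl, h⟩
    · cases he
  | cons f l ih =>
    obtain rfl | ⟨e, he, hde⟩ := hx
    · exact ⟨[], f :: l, rfl, rfl, h⟩
    obtain rfl | he := List.mem_cons.mp he
    · exact ⟨[e], l, rfl, ⟨h.1, hde⟩, hde ▸ h.2⟩
    · obtain ⟨l₁, l₂, rfl, h₁, h₂⟩ := ih h.2 (Or.inr ⟨e, he, hde⟩)
      exact ⟨f :: l₁, l₂, rfl, ⟨h.1, h₁⟩, h₂⟩

theorem IsWalk.src_eq_or_exists_dst_eq (h : IsWalk s d u v l) {e : ε} (he : e ∈ l) :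
    s e = u ∨ ∃ e' ∈ l, d e' = s e := by
  induction l generalizing u with
  | nil => cases he
  | cons f l ih =>
    obtain rfl | he := List.mem_cons.mp he
    · exact Or.inl h.1
    · obtain hdf | ⟨e', he', hd⟩ := ih h.2 he
      · exact Or.inr ⟨f, List.mem_cons_self, hdf.symm⟩
      · exact Or.inr ⟨e', List.mem_cons_of_mem f he', hd⟩

section Preorder

variable [Preorder V]

theorem IsWalk.le_src (h : IsWalk s d u v l) (hsd : ∀ e ∈ l, s e < d e) {e : ε}
    (he : e ∈ l) : u ≤ s e := by
  induction l generalizing u with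
  | nil => cases he
  | cons f l ih =>
    obtain rfl | he := List.mem_cons.mp he
    · exact h.1.ge
    · calc u = s f := h.1.symm
        _ ≤ d f := (hsd f List.mem_cons_self).le
        _ ≤ s e := ih h.2 (fun e' he' => hsd e' (List.mem_cons_of_mem f he')) he

theorem IsWalk.le (h : IsWalk s d u v l) (hsd : ∀ e ∈ l, s e < d e) : u ≤ v := by
  induction l generalizing u with
  | nil => exact le_of_eq h
  | cons e l ih =>
    calc u = s e := h.1.symm
      _ ≤ d e := (hsd e List.mem_cons_self).le
      _ ≤ v := ih h.2 (fun e' he' => hsd e' (List.mem_cons_of_mem e he'))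

theorem IsWalk.nodup (h : IsWalk s d u v l) (hsd : ∀ e ∈ l, s e < d e) : l.Nodup := by
  induction l generalizing u with
  | nil => exact List.nodup_nil
  | cons e l ih =>
    have hsd' : ∀ e' ∈ l, s e' < d e' := fun e' he' => hsd e' (List.mem_cons_of_mem e he')
    refine List.nodup_cons.mpr ⟨fun he => ?_, ih h.2 hsd'⟩
    exact (hsd e List.mem_cons_self).not_ge (h.2.le_src hsd' he)

theorem IsWalk.exists_infix (h : IsWalk s d u v l) (hsd : ∀ e ∈ l, s e < d e)
    (hx : x = u ∨ ∃ e ∈ l, d e = x) (hy : y = u ∨ ∃ e ∈ l, d e = y) (hxy : x ≤ y) :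
    ∃ m, m <:+: l ∧ IsWalk s d x y m := by
  obtain ⟨l₁, l₂, rfl, h₁, h₂⟩ := h.split hy
  have hx₁ : x = u ∨ ∃ e ∈ l₁, d e = x := by
    obtain rfl | ⟨e, he, rfl⟩ := hx
    · exact Or.inl rfl
    obtain he | he := List.mem_append.mp he
    · exact Or.inr ⟨e, he, rfl⟩
    · have hsd₂ : ∀ e ∈ l₂, s e < d e := fun e he => hsd e (List.mem_append_right l₁ he)
      exact absurd hxy ((h₂.le_src hsd₂ he).trans_lt (hsd₂ e he)).not_ge
  obtain ⟨m₁, m, rfl, -, hm⟩ := h₁.split hx₁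
  exact ⟨m, ⟨m₁, l₂, rfl⟩, hm⟩

end Preorder

end Walk

namespace DAGInst

variable {G : DAGInst} {u v : ℕ} {p Pi : List G.E} {w : G.E → ℝ}

theorem reaches_iff_exists_isWalk : G.Reaches u v ↔ ∃ q, IsWalk G.src G.dst u v q := by
  constructor
  · rintro (rfl | ⟨q, hq⟩)
    · exact ⟨[], rfl⟩
    · exact ⟨q, (isWalk_and_ne_nil_iff.mpr hq).1⟩
  · rintro ⟨_ | ⟨e, q⟩, hq⟩
    · exact Or.inl hq
    · exact Or.inr ⟨_, isWalk_and_ne_nil_iff.mp ⟨hq, List.cons_ne_nil e q⟩⟩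

theorem Reaches.le (h : G.Reaches u v) : u ≤ v := by
  obtain ⟨q, hq⟩ := reaches_iff_exists_isWalk.mp h
  exact hq.le fun e _ => G.src_lt_dst e

theorem Reaches.of_dst {e : G.E} (h : G.Reaches (G.dst e) v) : G.Reaches (G.src e) v := by
  obtain ⟨q, hq⟩ := reaches_iff_exists_isWalk.mp h
  exact reaches_iff_exists_isWalk.mpr ⟨e :: q, rfl, hq⟩

theorem IsPath.isWalk (hp : G.IsPath p) : IsWalk G.src G.dst 0 G.n p :=
  (isWalk_and_ne_nil_iff.mpr hp).1

theorem IsPath.visits_target (hp : G.IsPath p) : G.Visits p G.n := by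
  obtain ⟨e, he, hd⟩ := Option.map_eq_some_iff.mp hp.2.1
  exact Or.inr ⟨e, List.mem_of_getLast? he, hd⟩

theorem IsPath.visits_src (hp : G.IsPath p) {e : G.E} (he : e ∈ p) : G.Visits p (G.src e) :=
  (hp.isWalk.src_eq_or_exists_dst_eq he).imp id fun ⟨e', he', hd⟩ => ⟨e', he', hd⟩

theorem IsPath.reaches_target (hp : G.IsPath p) (hv : G.Visits p v) : G.Reaches v G.n := by
  obtain ⟨-, q, -, -, hq⟩ := hp.isWalk.split hv
  exact reaches_iff_exists_isWalk.mpr ⟨q, hq⟩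

def visitedReachableFrom (Pi : List G.E) (v : ℕ) : Set ℕ :=
  {y | G.Visits Pi y ∧ G.Reaches v y}

def IsAuxWalk (Pi : List G.E) (x y : ℕ) (p : List (G.E ⊕ G.E)) : Prop :=
  IsWalk G.auxSrc (G.auxDst Pi) x y p ∧ ∀ f ∈ p, G.auxValid Pi f

theorem IsAuxWalk.append {x y z : ℕ} {p q : List (G.E ⊕ G.E)} (hp : G.IsAuxWalk Pi x y p)
    (hq : G.IsAuxWalk Pi y z q) : G.IsAuxWalk Pi x z (p ++ q) :=
  ⟨hp.1.append hq.1, List.forall_mem_append.mpr ⟨hp.2, hq.2⟩⟩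

theorem IsAuxWalk.isAuxPath {p : List (G.E ⊕ G.E)} (hp : G.IsAuxWalk Pi 0 G.n p) :
    G.IsAuxPath Pi p := by
  have hne : p ≠ [] := by
    rintro rfl
    exact absurd hp.1 (Nat.pos_iff_ne_zero.mp G.n_pos).symm
  exact ⟨hp.2, isWalk_and_ne_nil_iff.mp ⟨hp.1, hne⟩⟩

theorem isLeast_auxDst_inr (hPi : G.Visits Pi G.n) {e : G.E} (he : G.Reaches (G.dst e) G.n) :
    IsLeast (G.visitedReachableFrom Pi (G.dst e)) (G.auxDst Pi (.inr e)) :=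
  isLeast_csInf ⟨G.n, hPi, he⟩

theorem auxSrc_lt_auxDst (hPi : G.Visits Pi G.n) (hreach : ∀ v ≤ G.n, G.Reaches v G.n) :
    ∀ f, G.auxSrc f < G.auxDst Pi f
  | .inl e => G.src_lt_dst e
  | .inr e => (G.src_lt_dst e).trans_le
      (isLeast_auxDst_inr hPi (hreach _ (G.dst_le_n e))).1.2.le

theorem auxWeight_nonneg (hw : ∀ e, 0 ≤ w e) : ∀ f, 0 ≤ G.auxWeight w f
  | .inl e => hw e
  | .inr e => hw e

theorem sum_auxWeight_nonneg (hw : ∀ e, 0 ≤ w e) (p : List (G.E ⊕ G.E)) :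
    0 ≤ (p.map (G.auxWeight w)).sum :=
  List.sum_nonneg fun _ hx =>
    let ⟨f, _, hf⟩ := List.mem_map.mp hx
    hf ▸ auxWeight_nonneg hw f

def auxEdge (Pi : List G.E) (e : G.E) : G.E ⊕ G.E :=
  if G.Visits Pi (G.dst e) then .inl e else .inr e

theorem auxSrc_auxEdge (e : G.E) : G.auxSrc (G.auxEdge Pi e) = G.src e := by
  unfold auxEdge; split <;> rfl

theorem auxWeight_auxEdge (e : G.E) : G.auxWeight w (G.auxEdge Pi e) = w e := by
  unfold auxEdge; split <;> rfl

theorem auxValid_auxEdge {e : G.E} (he : G.Visits Pi (G.src e)) :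
    G.auxValid Pi (G.auxEdge Pi e) := by
  unfold auxEdge; split <;> exact ⟨he, ‹_›⟩

theorem isLeast_auxDst_auxEdge (hPi : G.Visits Pi G.n) {e : G.E}
    (he : G.Reaches (G.dst e) G.n) :
    IsLeast (G.visitedReachableFrom Pi (G.dst e)) (G.auxDst Pi (G.auxEdge Pi e)) := by
  unfold auxEdge
  split
  · exact ⟨⟨‹_›, Or.inl rfl⟩, fun _ hy => hy.2.le⟩
  · exact isLeast_auxDst_inr hPi he

theorem IsPath.exists_auxWalk (hPi : G.IsPath Pi) {x y : ℕ} (hx : G.Visits Pi x)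
    (hy : G.Visits Pi y) (hxy : x ≤ y) : ∃ c, G.IsAuxWalk Pi x y c := by
  obtain ⟨m, hm, hwalk⟩ := hPi.isWalk.exists_infix (fun e _ => G.src_lt_dst e) hx hy hxy
  refine ⟨m.map .inl, hwalk.map _ (fun _ => rfl) (fun _ => rfl), fun f hf => ?_⟩
  obtain ⟨e, he, rfl⟩ := List.mem_map.mp hf
  exact ⟨hPi.visits_src (hm.subset he), Or.inr ⟨e, hm.subset he, rfl⟩⟩

def weightLeaving (w : G.E → ℝ) (Pi : List G.E) (e : G.E) : ℝ :=
  if G.Visits Pi (G.src e) then w e else 0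

/-- Follow `Q`, copying each edge that leaves `V(P_i)` by its `auxEdge` and bridging the gaps
along `P_i`; the lower-bound invariant on `x` makes every bridge go forward. -/
theorem IsPath.exists_auxWalk_sum_weightLeaving_le (hw : ∀ e, 0 ≤ w e) (hPi : G.IsPath Pi) :
    ∀ {Q : List G.E} {v x : ℕ}, IsWalk G.src G.dst v G.n Q → G.Visits Pi x →
      x ∈ lowerBounds (G.visitedReachableFrom Pi v) →
      ∃ p, G.IsAuxWalk Pi x G.n p ∧
        (Q.map (G.weightLeaving w Pi)).sum ≤ (p.map (G.auxWeight w)).sum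
  | [], v, x, hQ, hx, hlb => by
    obtain rfl : v = G.n := hQ
    obtain ⟨c, hc⟩ :=
      hPi.exists_auxWalk hx hPi.visits_target (hlb ⟨hPi.visits_target, Or.inl rfl⟩)
    exact ⟨c, hc, by simpa using G.sum_auxWeight_nonneg hw c⟩
  | f :: Q, v, x, ⟨hfv, hQ⟩, hx, hlb => by
    subst hfv
    by_cases hf : G.Visits Pi (G.src f)
    · obtain ⟨c, hc⟩ := hPi.exists_auxWalk hx hf (hlb ⟨hf, Or.inl rfl⟩)
      have hleast := isLeast_auxDst_auxEdge hPi.visits_target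
        (reaches_iff_exists_isWalk.mpr ⟨Q, hQ⟩)
      obtain ⟨p, hp, hsum⟩ := hPi.exists_auxWalk_sum_weightLeaving_le hw hQ hleast.1.1 hleast.2
      have hcons : G.IsAuxWalk Pi (G.src f) G.n (G.auxEdge Pi f :: p) :=
        ⟨⟨auxSrc_auxEdge f, hp.1⟩, List.forall_mem_cons.mpr ⟨auxValid_auxEdge hf, hp.2⟩⟩
      refine ⟨c ++ G.auxEdge Pi f :: p, hc.append hcons, ?_⟩
      simp only [List.map_cons, List.sum_cons, List.map_append, List.sum_append, weightLeaving,
        if_pos hf, auxWeight_auxEdge]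
      linarith [G.sum_auxWeight_nonneg hw c]
    · obtain ⟨p, hp, hsum⟩ := hPi.exists_auxWalk_sum_weightLeaving_le hw hQ hx
        fun y hy => hlb ⟨hy.1, hy.2.of_dst⟩
      refine ⟨p, hp, ?_⟩
      simpa only [List.map_cons, List.sum_cons, weightLeaving, if_neg hf, zero_add] using hsum

theorem bddAbove_auxPathValues (hw : ∀ e, 0 ≤ w e) (hPi : G.Visits Pi G.n)
    (hreach : ∀ v ≤ G.n, G.Reaches v G.n) :
    BddAbove {x | ∃ p : List (G.E ⊕ G.E), G.IsAuxPath Pi p ∧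
      x = (p.map (G.auxWeight w)).sum} := by
  classical
  refine ⟨∑ f, G.auxWeight w f, ?_⟩
  rintro _ ⟨p, hp, rfl⟩
  have hnd : p.Nodup := (isWalk_and_ne_nil_iff.mpr hp.2).1.nodup
    fun f _ => auxSrc_lt_auxDst hPi hreach f
  rw [← List.sum_toFinset _ hnd]
  exact Finset.sum_le_univ_sum_of_nonneg (auxWeight_nonneg hw)

theorem IsPath.sum_weightLeaving_le_sSup (hw : ∀ e, 0 ≤ w e) (hPi : G.IsPath Pi)
    (hreach : ∀ v ≤ G.n, G.Reaches v G.n) {Q : List G.E} (hQ : G.IsPath Q) :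
    (Q.map (G.weightLeaving w Pi)).sum ≤
      sSup {x | ∃ p : List (G.E ⊕ G.E), G.IsAuxPath Pi p ∧
        x = (p.map (G.auxWeight w)).sum} := by
  obtain ⟨p, hp, hsum⟩ := hPi.exists_auxWalk_sum_weightLeaving_le hw hQ.isWalk (Or.inl rfl)
    fun y _ => Nat.zero_le y
  exact hsum.trans (le_csSup (bddAbove_auxPathValues hw hPi.visits_target hreach)
    ⟨p, hp.isAuxPath, rfl⟩)

theorem pathValue_le_sum_weightLeaving {ι : Type*} [Fintype ι] (hw : ∀ e, 0 ≤ w e)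
    (P : ι → List G.E) {Q : List G.E} (hcover : ∀ e ∈ Q, ∃ i, G.Visits (P i) (G.src e)) :
    G.pathValue Q w ≤ ∑ i, (Q.map (G.weightLeaving w (P i))).sum := by
  have hweightLeaving_nonneg : ∀ i e, 0 ≤ G.weightLeaving w (P i) e := fun i e => by
    unfold weightLeaving; split
    exacts [hw e, le_rfl]
  calc G.pathValue Q w ≤ (Q.map fun e => ∑ i, G.weightLeaving w (P i) e).sum := by
        refine List.sum_le_sum fun e he => ?_
        obtain ⟨i, hi⟩ := hcover e he
        calc w e = G.weightLeaving w (P i) e := (if_pos hi).symm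
          _ ≤ ∑ j, G.weightLeaving w (P j) e :=
            Finset.single_le_sum (fun j _ => hweightLeaving_nonneg j e) (Finset.mem_univ i)
    _ = ∑ i, (Q.map (G.weightLeaving w (P i))).sum :=
        Multiset.sum_map_sum (m := (Q : Multiset G.E))

end DAGInst

/-- **Decomposition inequality** (used in the proof of Theorem 4.1): the value of the best
`s,t`-path of `G` is at most the sum over `i` of the values of the best `s,t`-paths of the
auxiliary graphs `G_i`. -/
theorem decomposition_inequality
    (G : DAGInst) (w : G.E → ℝ) (hw : ∀ e, 0 ≤ w e)
    (k : ℕ) (P : Fin k → List G.E) (hP : ∀ i, G.IsPath (P i))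
    (hcover : ∀ v ≤ G.n, ∃ i, G.Visits (P i) v) :
    sSup {x | ∃ Q, G.IsPath Q ∧ x = G.pathValue Q w} ≤
      ∑ i : Fin k,
        sSup {x | ∃ p : List (G.E ⊕ G.E), G.IsAuxPath (P i) p ∧
          x = (p.map (G.auxWeight w)).sum} := by
  have hreach : ∀ v ≤ G.n, G.Reaches v G.n := fun v hv =>
    let ⟨i, hi⟩ := hcover v hv
    (hP i).reaches_target hi
  refine Real.sSup_le ?_ (Finset.sum_nonneg fun i _ => Real.sSup_nonneg ?_)
  · rintro _ ⟨Q, hQ, rfl⟩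
    calc G.pathValue Q w ≤ ∑ i, (Q.map (G.weightLeaving w (P i))).sum :=
          G.pathValue_le_sum_weightLeaving hw P fun e _ =>
            hcover _ ((G.src_lt_dst e).le.trans (G.dst_le_n e))
      _ ≤ _ := Finset.sum_le_sum fun i _ => (hP i).sum_weightLeaving_le_sSup hw hreach hQ
  · rintro _ ⟨p, -, rfl⟩
    exact G.sum_auxWeight_nonneg hw p
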